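/- arXiv:2503.03878 — 4 statements merged into one kernel-verified Lean document; each statement's English description precedes it below -/
import Mathlib

section
/- Let H, H' be finite-dimensional Hilbert spaces, let Λ be an operator on H with 0 ≤ Λ ≤ I, and let V : H → H' be a co-isometry (V V† = I) such that Π := V Λ V† is a projection. Then the range I of V† is invariant under Λ, i.e., Λ maps I into I. -/
/-!
Write `P = V Λ Vᴴ`, so that `V (1 - Λ) Vᴴ = 1 - P` since `V Vᴴ = 1`. Sandwiching, the positive
operators `1 - Λ` and `Λ` have vanishing quadratic forms `P (1 - P) P = 0` and
`(1 - P) P (1 - P) = 0` on the ranges of `Vᴴ P` and `Vᴴ (1 - P)`. A positive operator kills every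
vector on which its quadratic form vanishes, hence `Λ Vᴴ P = Vᴴ P` and `Λ Vᴴ (1 - P) = 0`; adding,
`Λ Vᴴ = Vᴴ P`, which maps the range of `Vᴴ` into itself.
-/

open Matrix ComplexOrder

open scoped MatrixOrder in
theorem Matrix.PosSemidef.mul_eq_zero_of_conjTranspose_mul_mul_eq_zero
    {𝕜 m n : Type*} [RCLike 𝕜] [Fintype m] [Fintype n] {M : Matrix n n 𝕜} (hM : M.PosSemidef)
    {N : Matrix n m 𝕜} (h : Nᴴ * M * N = 0) : M * N = 0 := by
  classical
  obtain ⟨B, rfl⟩ := CStarAlgebra.nonneg_iff_eq_star_mul_self.mp hM.nonneg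
  have hBN : B * N = 0 := by
    rw [← conjTranspose_mul_self_eq_zero, conjTranspose_mul, ← h, star_eq_conjTranspose]
    simp only [Matrix.mul_assoc]
  rw [Matrix.mul_assoc, hBN, Matrix.mul_zero]

theorem Matrix.mul_conjTranspose_eq_conjTranspose_mul_compression
    {𝕜 ι κ : Type*} [RCLike 𝕜] [Fintype ι] [Fintype κ] [DecidableEq ι] [DecidableEq κ]
    {Λ : Matrix ι ι 𝕜} {V : Matrix κ ι 𝕜} (hΛ : Λ.PosSemidef) (hΛ' : (1 - Λ).PosSemidef)
    (hV : V * Vᴴ = 1) (hP : IsIdempotentElem (V * Λ * Vᴴ)) :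
    Λ * Vᴴ = Vᴴ * (V * Λ * Vᴴ) := by
  set P := V * Λ * Vᴴ with hP_def
  have hP_herm : Pᴴ = P := by
    rw [hP_def, conjTranspose_mul, conjTranspose_mul, conjTranspose_conjTranspose, hΛ.1.eq,
      Matrix.mul_assoc]
  have sandwich : ∀ (M : Matrix ι ι 𝕜) (X : Matrix κ κ 𝕜),
      (Vᴴ * X)ᴴ * M * (Vᴴ * X) = Xᴴ * (V * M * Vᴴ) * X := by
    intro M X
    simp only [conjTranspose_mul, conjTranspose_conjTranspose, Matrix.mul_assoc]
  have hcompl : V * (1 - Λ) * Vᴴ = 1 - P := by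
    rw [Matrix.mul_sub, Matrix.sub_mul, Matrix.mul_one, hV]
  have hfix : (1 - Λ) * (Vᴴ * P) = 0 :=
    hΛ'.mul_eq_zero_of_conjTranspose_mul_mul_eq_zero <| by
      rw [sandwich, hcompl, hP_herm, hP.mul_one_sub_self, Matrix.zero_mul]
  have hkill : Λ * (Vᴴ * (1 - P)) = 0 :=
    hΛ.mul_eq_zero_of_conjTranspose_mul_mul_eq_zero <| by
      rw [sandwich, conjTranspose_sub, conjTranspose_one, hP_herm, ← hP_def,
        hP.one_sub_mul_self, Matrix.zero_mul]
  calc Λ * Vᴴ = Λ * (Vᴴ * P) + Λ * (Vᴴ * (1 - P)) := by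
        rw [← Matrix.mul_add, ← Matrix.mul_add, add_sub_cancel, Matrix.mul_one]
    _ = Vᴴ * P := by
        rw [hkill, add_zero, eq_comm, ← sub_eq_zero, ← hfix, Matrix.sub_mul, Matrix.one_mul]

theorem range_adjoint_coisometry_invariant_general
    {n m : ℕ} (Λ : Matrix (Fin n) (Fin n) ℂ) (V : Matrix (Fin m) (Fin n) ℂ)
    (hΛ : Λ.PosSemidef) (hΛ' : (1 - Λ).PosSemidef)
    (hV : V * Vᴴ = 1)
    (hproj : (V * Λ * Vᴴ) * (V * Λ * Vᴴ) = V * Λ * Vᴴ) :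
    ∀ ψ : Fin m → ℂ, ∃ φ : Fin m → ℂ, Λ *ᵥ (Vᴴ *ᵥ ψ) = Vᴴ *ᵥ φ := fun ψ =>
  ⟨(V * Λ * Vᴴ) *ᵥ ψ, by
    rw [mulVec_mulVec, mulVec_mulVec,
      mul_conjTranspose_eq_conjTranspose_mul_compression hΛ hΛ' hV hproj]⟩

/-- If `0 ≤ Λ ≤ I`, `V` is a co-isometry (`V * Vᴴ = 1`) and
`Π := V * Λ * Vᴴ` is an (orthogonal) projection, then the range of `Vᴴ` is
invariant under `Λ`. -/
theorem range_adjoint_coisometry_invariant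
    {n m : ℕ} (Λ : Matrix (Fin n) (Fin n) ℂ) (V : Matrix (Fin m) (Fin n) ℂ)
    (hΛ : Λ.PosSemidef) (hΛ' : (1 - Λ).PosSemidef)
    (hV : V * Vᴴ = 1)
    (hproj : (V * Λ * Vᴴ) * (V * Λ * Vᴴ) = V * Λ * Vᴴ)
    (hherm : (V * Λ * Vᴴ)ᴴ = V * Λ * Vᴴ) :
    ∀ ψ : Fin m → ℂ, ∃ φ : Fin m → ℂ, Λ *ᵥ (Vᴴ *ᵥ ψ) = Vᴴ *ᵥ φ :=
  range_adjoint_coisometry_invariant_general Λ V hΛ hΛ' hV hproj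
end

section
/- (Tsirelson's bound, operator form) Let A₀, A₁, B₀, B₁ be self-adjoint operators on finite-dimensional Hilbert spaces H_A, H_B with Aᵢ² ≤ I and Bⱼ² ≤ I. Then the CHSH operator A₀⊗B₀ + A₀⊗B₁ + A₁⊗B₀ − A₁⊗B₁ satisfies −2√2·I ≤ A₀⊗B₀ + A₀⊗B₁ + A₁⊗B₀ − A₁⊗B₁ ≤ 2√2·I. -/
/-!
Sum of squares: if `a₀, a₁, b₀, b₁` are self-adjoint, `x * x ≤ 1` for each of them, and every
`aᵢ` commutes with every `bⱼ`, then
`2√2 (2√2 - C) = 2 ∑ (1 - x²) + (√2 a₀ - b₀ - b₁)² + (√2 a₁ - b₀ + b₁)²`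
for the CHSH element `C`, so `C ≤ 2√2`; replacing `bⱼ` by `-bⱼ` gives `-2√2 ≤ C`.
This holds in any star-ordered `ℝ`-algebra, and for matrices one takes `aᵢ = Aᵢ ⊗ 1`,
`bⱼ = 1 ⊗ Bⱼ`.
-/

open Matrix Kronecker ComplexOrder

open scoped MatrixOrder

section CHSH

variable {R : Type*} [Ring R]

def chsh (a₀ a₁ b₀ b₁ : R) : R := a₀ * b₀ + a₀ * b₁ + a₁ * b₀ - a₁ * b₁

lemma chsh_neg_right (a₀ a₁ b₀ b₁ : R) : chsh a₀ a₁ (-b₀) (-b₁) = -chsh a₀ a₁ b₀ b₁ := by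
  unfold chsh
  noncomm_ring

lemma chsh_eq_mul_add_mul (a₀ a₁ b₀ b₁ : R) :
    chsh a₀ a₁ b₀ b₁ = a₀ * (b₀ + b₁) + a₁ * (b₀ - b₁) := by
  rw [chsh, mul_add, mul_sub, add_sub_assoc]

variable [Algebra ℝ R]

lemma Commute.smul_sub_mul_self {x y : R} (h : Commute x y) (r : ℝ) :
    (r • x - y) * (r • x - y) = r ^ 2 • (x * x) - (2 * r) • (x * y) + y * y := by
  simp only [sub_mul, mul_sub, smul_mul_assoc, mul_smul_comm, h.eq]
  module

lemma two_sqrt_two_smul_chsh {a₀ a₁ b₀ b₁ : R}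
    (h₀₀ : Commute a₀ b₀) (h₀₁ : Commute a₀ b₁) (h₁₀ : Commute a₁ b₀) (h₁₁ : Commute a₁ b₁) :
    (2 * √2) • chsh a₀ a₁ b₀ b₁ =
      (2 : ℝ) • (a₀ * a₀ + a₁ * a₁ + b₀ * b₀ + b₁ * b₁)
        - ((√2 • a₀ - (b₀ + b₁)) * (√2 • a₀ - (b₀ + b₁))
          + (√2 • a₁ - (b₀ - b₁)) * (√2 • a₁ - (b₀ - b₁))) := by
  rw [(h₀₀.add_right h₀₁).smul_sub_mul_self, (h₁₀.sub_right h₁₁).smul_sub_mul_self,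
    Real.sq_sqrt zero_le_two]
  have hb : (b₀ + b₁) * (b₀ + b₁) + (b₀ - b₁) * (b₀ - b₁) = 2 • (b₀ * b₀ + b₁ * b₁) := by
    noncomm_ring
  rw [chsh_eq_mul_add_mul]
  linear_combination (norm := module) hb

variable [StarRing R] [PartialOrder R] [StarOrderedRing R] [StarModule ℝ R]

theorem chsh_le_two_sqrt_two {a₀ a₁ b₀ b₁ : R}
    (ha₀ : IsSelfAdjoint a₀) (ha₁ : IsSelfAdjoint a₁) (hb₀ : IsSelfAdjoint b₀)
    (hb₁ : IsSelfAdjoint b₁) (ha₀' : a₀ * a₀ ≤ 1) (ha₁' : a₁ * a₁ ≤ 1) (hb₀' : b₀ * b₀ ≤ 1)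
    (hb₁' : b₁ * b₁ ≤ 1)
    (h₀₀ : Commute a₀ b₀) (h₀₁ : Commute a₀ b₁) (h₁₀ : Commute a₁ b₀) (h₁₁ : Commute a₁ b₁) :
    chsh a₀ a₁ b₀ b₁ ≤ (2 * √2) • (1 : R) := by
  have hP : IsSelfAdjoint (√2 • a₀ - (b₀ + b₁)) :=
    ((IsSelfAdjoint.all _).smul ha₀).sub (hb₀.add hb₁)
  have hQ : IsSelfAdjoint (√2 • a₁ - (b₀ - b₁)) :=
    ((IsSelfAdjoint.all _).smul ha₁).sub (hb₀.sub hb₁)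
  have hsos : (2 * √2) • ((2 * √2) • (1 : R) - chsh a₀ a₁ b₀ b₁) =
      (2 : ℝ) • ((1 - a₀ * a₀) + (1 - a₁ * a₁) + (1 - b₀ * b₀) + (1 - b₁ * b₁))
        + ((√2 • a₀ - (b₀ + b₁)) * (√2 • a₀ - (b₀ + b₁))
          + (√2 • a₁ - (b₀ - b₁)) * (√2 • a₁ - (b₀ - b₁))) := by
    rw [smul_sub, two_sqrt_two_smul_chsh h₀₀ h₀₁ h₁₀ h₁₁, smul_smul,
      show 2 * √2 * (2 * √2) = 8 by ring_nf; norm_num]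
    module
  rw [← sub_nonneg, ← smul_nonneg_iff_nonneg_of_pos_left (by positivity : (0 : ℝ) < 2 * √2),
    hsos]
  refine add_nonneg (smul_nonneg zero_le_two ?_) (add_nonneg hP.mul_self_nonneg hQ.mul_self_nonneg)
  exact add_nonneg (add_nonneg (add_nonneg (sub_nonneg.2 ha₀') (sub_nonneg.2 ha₁'))
    (sub_nonneg.2 hb₀')) (sub_nonneg.2 hb₁')

theorem neg_two_sqrt_two_le_chsh {a₀ a₁ b₀ b₁ : R}
    (ha₀ : IsSelfAdjoint a₀) (ha₁ : IsSelfAdjoint a₁) (hb₀ : IsSelfAdjoint b₀)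
    (hb₁ : IsSelfAdjoint b₁) (ha₀' : a₀ * a₀ ≤ 1) (ha₁' : a₁ * a₁ ≤ 1) (hb₀' : b₀ * b₀ ≤ 1)
    (hb₁' : b₁ * b₁ ≤ 1)
    (h₀₀ : Commute a₀ b₀) (h₀₁ : Commute a₀ b₁) (h₁₀ : Commute a₁ b₀) (h₁₁ : Commute a₁ b₁) :
    -((2 * √2) • (1 : R)) ≤ chsh a₀ a₁ b₀ b₁ := by
  have h := chsh_le_two_sqrt_two ha₀ ha₁ hb₀.neg hb₁.neg ha₀' ha₁'
    (by rwa [neg_mul_neg]) (by rwa [neg_mul_neg])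
    h₀₀.neg_right h₀₁.neg_right h₁₀.neg_right h₁₁.neg_right
  rw [chsh_neg_right] at h
  exact neg_le.1 h

end CHSH

namespace Matrix

section Kronecker

variable {α 𝕜 m n : Type*}

theorem IsHermitian.kronecker [CommSemiring α] [StarRing α] {A : Matrix m m α}
    {B : Matrix n n α} (hA : A.IsHermitian) (hB : B.IsHermitian) : (A ⊗ₖ B).IsHermitian := by
  rw [IsHermitian, conjTranspose_kronecker, hA.eq, hB.eq]

variable [Fintype m] [Fintype n]

section Order

variable [RCLike 𝕜] {A A' : Matrix m m 𝕜} {B B' : Matrix n n 𝕜}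

theorem kronecker_le_kronecker_of_nonneg_right (h : A ≤ A') (hB : 0 ≤ B) :
    A ⊗ₖ B ≤ A' ⊗ₖ B := by
  rw [le_iff, ← sub_add_cancel A' A, add_kronecker, add_sub_cancel_right]
  exact (le_iff.1 h).kronecker hB.posSemidef

theorem kronecker_le_kronecker_of_nonneg_left (h : B ≤ B') (hA : 0 ≤ A) :
    A ⊗ₖ B ≤ A ⊗ₖ B' := by
  rw [le_iff, ← sub_add_cancel B' B, kronecker_add, add_sub_cancel_right]
  exact hA.posSemidef.kronecker (le_iff.1 h)

variable [DecidableEq m] [DecidableEq n]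

theorem kronecker_one_mul_self_le_one (h : A * A ≤ 1) :
    (A ⊗ₖ 1) * (A ⊗ₖ 1) ≤ (1 : Matrix (m × n) (m × n) 𝕜) := by
  rw [← mul_kronecker_mul, mul_one, ← one_kronecker_one]
  exact kronecker_le_kronecker_of_nonneg_right h PosSemidef.one.nonneg

theorem one_kronecker_mul_self_le_one (h : B * B ≤ 1) :
    (1 ⊗ₖ B) * (1 ⊗ₖ B) ≤ (1 : Matrix (m × n) (m × n) 𝕜) := by
  rw [← mul_kronecker_mul, mul_one, ← one_kronecker_one]
  exact kronecker_le_kronecker_of_nonneg_left h PosSemidef.one.nonneg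

end Order

variable [DecidableEq m] [DecidableEq n] [CommSemiring α] (A : Matrix m m α) (B : Matrix n n α)

theorem kronecker_one_mul_one_kronecker : (A ⊗ₖ 1) * (1 ⊗ₖ B) = A ⊗ₖ B := by
  rw [← mul_kronecker_mul, mul_one, one_mul]

theorem one_kronecker_mul_kronecker_one : (1 ⊗ₖ B) * (A ⊗ₖ 1) = A ⊗ₖ B := by
  rw [← mul_kronecker_mul, mul_one, one_mul]

theorem commute_kronecker_one_one_kronecker : Commute (A ⊗ₖ 1) (1 ⊗ₖ B) :=
  (kronecker_one_mul_one_kronecker A B).trans (one_kronecker_mul_kronecker_one A B).symm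

end Kronecker

end Matrix

/-- Tsirelson's bound, operator form: if `A₀, A₁, B₀, B₁` are
self-adjoint operators with `Aᵢ² ≤ I`, `Bⱼ² ≤ I`, then
`−2√2·I ≤ A₀⊗B₀ + A₀⊗B₁ + A₁⊗B₀ − A₁⊗B₁ ≤ 2√2·I`. -/
theorem tsirelson_bound_operator
    {nA nB : ℕ}
    (A₀ A₁ : Matrix (Fin nA) (Fin nA) ℂ) (B₀ B₁ : Matrix (Fin nB) (Fin nB) ℂ)
    (hA₀ : A₀.IsHermitian) (hA₁ : A₁.IsHermitian)
    (hB₀ : B₀.IsHermitian) (hB₁ : B₁.IsHermitian)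
    (hA₀sq : (1 - A₀ * A₀).PosSemidef) (hA₁sq : (1 - A₁ * A₁).PosSemidef)
    (hB₀sq : (1 - B₀ * B₀).PosSemidef) (hB₁sq : (1 - B₁ * B₁).PosSemidef) :
    (((2 * Real.sqrt 2 : ℝ) : ℂ) • (1 : Matrix (Fin nA × Fin nB) (Fin nA × Fin nB) ℂ)
        - (A₀ ⊗ₖ B₀ + A₀ ⊗ₖ B₁ + A₁ ⊗ₖ B₀ - A₁ ⊗ₖ B₁)).PosSemidef ∧
    ((A₀ ⊗ₖ B₀ + A₀ ⊗ₖ B₁ + A₁ ⊗ₖ B₀ - A₁ ⊗ₖ B₁)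
        + ((2 * Real.sqrt 2 : ℝ) : ℂ) • (1 : Matrix (Fin nA × Fin nB) (Fin nA × Fin nB) ℂ)).PosSemidef := by
  have hc (A : Matrix (Fin nA) (Fin nA) ℂ) (B : Matrix (Fin nB) (Fin nB) ℂ) :=
    commute_kronecker_one_one_kronecker A B
  have ha₀ := hA₀.kronecker (isHermitian_one (n := Fin nB))
  have ha₁ := hA₁.kronecker (isHermitian_one (n := Fin nB))
  have hb₀ := (isHermitian_one (n := Fin nA)).kronecker hB₀
  have hb₁ := (isHermitian_one (n := Fin nA)).kronecker hB₁
  have ha₀' := kronecker_one_mul_self_le_one (n := Fin nB) (le_iff.2 hA₀sq)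
  have ha₁' := kronecker_one_mul_self_le_one (n := Fin nB) (le_iff.2 hA₁sq)
  have hb₀' := one_kronecker_mul_self_le_one (m := Fin nA) (le_iff.2 hB₀sq)
  have hb₁' := one_kronecker_mul_self_le_one (m := Fin nA) (le_iff.2 hB₁sq)
  have hchsh : A₀ ⊗ₖ B₀ + A₀ ⊗ₖ B₁ + A₁ ⊗ₖ B₀ - A₁ ⊗ₖ B₁ =
      chsh (A₀ ⊗ₖ 1) (A₁ ⊗ₖ 1) (1 ⊗ₖ B₀) (1 ⊗ₖ B₁) := by
    simp only [chsh, kronecker_one_mul_one_kronecker]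
  rw [hchsh, Complex.coe_smul, ← sub_neg_eq_add, ← le_iff, ← le_iff]
  exact ⟨chsh_le_two_sqrt_two ha₀ ha₁ hb₀ hb₁ ha₀' ha₁' hb₀' hb₁'
      (hc _ _) (hc _ _) (hc _ _) (hc _ _),
    neg_two_sqrt_two_le_chsh ha₀ ha₁ hb₀ hb₁ ha₀' ha₁' hb₀' hb₁'
      (hc _ _) (hc _ _) (hc _ _) (hc _ _)⟩
end

section
/- Let G = (V, E) be a finite simple graph, fix a vertex v₁ with neighbour set n(1), and for i ∈ n(1) let EN_i be the set of vertices j ∉ {1, i} such that j is a neighbour of both 1 and i, or of neither. Then for every i ∈ n(1), the operator −X₁ ⊗ X_i ⊗ ⊗_{j ∈ EN_i} Z_j maps |φ₊⟩ to |φ₋⟩ and |φ₋⟩ to |φ₊⟩. -/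
open Matrix

noncomputable section

variable {N : ℕ}

/-- The Pauli string with `X` on the factors in `SX` and `Z` on the factors in
`SZ`, as a matrix in the computational basis of `(ℂ²)^{⊗N}`. -/
def pauliString (SX SZ : Finset (Fin N)) :
    Matrix (Fin N → Bool) (Fin N → Bool) ℂ := fun y x =>
  (if (∀ j, y j = (if j ∈ SX then !x j else x j)) then 1 else 0) *
    ∏ j ∈ SZ, (if x j then (-1 : ℂ) else 1)

/-- The graph state `|φ₊⟩ = 2^{−N/2} Σ_x (−1)^{Σ_{{i,j}∈E} x_i x_j} |x⟩`. -/
def graphState (G : SimpleGraph (Fin N)) [DecidableRel G.Adj] :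
    (Fin N → Bool) → ℂ := fun x =>
  ((Real.sqrt 2 : ℂ))⁻¹ ^ N *
    ∏ i : Fin N, ∏ j : Fin N,
      if G.Adj i j ∧ i < j ∧ x i = true ∧ x j = true then (-1 : ℂ) else 1

/-- The anti-graph state. -/
def antiGraphState (G : SimpleGraph (Fin N)) [DecidableRel G.Adj] :
    (Fin N → Bool) → ℂ := fun x =>
  graphState G x * ∏ i : Fin N, (if x i = true then (-1 : ℂ) else 1)

/-- The set `EN_i` of even neighbours: vertices `j ∉ {v₁, i}` that are
neighbours of both `v₁` and `i`, or of neither. -/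
def evenNeighbours (G : SimpleGraph (Fin N)) [DecidableRel G.Adj]
    (v₁ i : Fin N) : Finset (Fin N) :=
  Finset.univ.filter (fun j => j ≠ v₁ ∧ j ≠ i ∧
    ((G.Adj v₁ j ∧ G.Adj i j) ∨ (¬ G.Adj v₁ j ∧ ¬ G.Adj i j)))

/-! ### Auxiliary definitions and lemmas -/

/-- The sign `(-1)^b`. -/
def sgn (b : Bool) : ℂ := if b = true then -1 else 1

lemma sgn_mul_self (b : Bool) : sgn b * sgn b = 1 := by cases b <;> simp [sgn]

/-- Flip the bits in the set `S`. -/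
def flipS (S : Finset (Fin N)) (y : Fin N → Bool) : Fin N → Bool :=
  fun j => if j ∈ S then !y j else y j

lemma pauliString_mulVec (SX SZ : Finset (Fin N)) (f : (Fin N → Bool) → ℂ)
    (y : Fin N → Bool) :
    (pauliString SX SZ *ᵥ f) y
      = (∏ j ∈ SZ, sgn (flipS SX y j)) * f (flipS SX y) := by
  classical
  simp only [mulVec, dotProduct, pauliString]
  rw [Finset.sum_eq_single_of_mem (flipS SX y) (Finset.mem_univ _)]
  · rw [if_pos]
    · simp [sgn]
    · intro j; by_cases hj : j ∈ SX <;> simp [flipS, hj]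
  · intro x _ hx
    rw [if_neg, zero_mul, zero_mul]
    intro hall
    apply hx
    funext j
    have hj := hall j
    by_cases hjs : j ∈ SX <;> simp [flipS, hjs] at hj ⊢ <;> simp [hj]

/-- The interaction-sign part of the graph state. -/
def inter (G : SimpleGraph (Fin N)) [DecidableRel G.Adj] (z : Fin N → Bool) : ℂ :=
  ∏ a : Fin N, ∏ b : Fin N,
    if G.Adj a b ∧ a < b ∧ z a = true ∧ z b = true then (-1:ℂ) else 1

/-- Flipping a single bit `v` multiplies the interaction sign by the signs of
the neighbours of `v`. -/
lemma inter_update (G : SimpleGraph (Fin N)) [DecidableRel G.Adj]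
    (v : Fin N) (y : Fin N → Bool) :
    inter G (Function.update y v (!y v))
      = inter G y * ∏ j, (if G.Adj v j ∧ y j = true then (-1:ℂ) else 1) := by
  classical
  set x := Function.update y v (!y v) with hxdef
  have hx_v : x v = !y v := Function.update_self _ _ _
  have hx_ne : ∀ j, j ≠ v → x j = y j := fun j hj => Function.update_of_ne hj _ _
  have main : ∀ a b : Fin N,
      (if G.Adj a b ∧ a < b ∧ x a = true ∧ x b = true then (-1:ℂ) else 1)
    = ((if a = v then (if G.Adj v b ∧ v < b ∧ y b = true then (-1:ℂ) else 1) else 1)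
        * (if b = v then (if G.Adj a v ∧ a < v ∧ y a = true then (-1:ℂ) else 1) else 1))
      * (if G.Adj a b ∧ a < b ∧ y a = true ∧ y b = true then (-1:ℂ) else 1) := by
    intro a b
    by_cases hav : a = v
    · subst hav
      by_cases hbv : b = a
      · simp [hbv, lt_irrefl]
      · rw [hx_v, hx_ne b hbv]
        cases hyv : y a <;> simp [hbv, hyv] <;> split_ifs <;> norm_num
    · by_cases hbv : b = v
      · subst hbv
        rw [hx_ne a hav, hx_v]
        cases hyv : y b <;> simp [hav, hyv] <;> split_ifs <;> norm_num
      · rw [hx_ne a hav, hx_ne b hbv]; simp [hav, hbv]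
  have step1 : inter G x
      = (∏ a : Fin N, ∏ b : Fin N,
          ((if a = v then (if G.Adj v b ∧ v < b ∧ y b = true then (-1:ℂ) else 1) else 1)
            * (if b = v then (if G.Adj a v ∧ a < v ∧ y a = true then (-1:ℂ) else 1) else 1)))
        * inter G y := by
    rw [inter, inter, ← Finset.prod_mul_distrib]
    refine Finset.prod_congr rfl fun a _ => ?_
    rw [← Finset.prod_mul_distrib]
    exact Finset.prod_congr rfl fun b _ => main a b
  have step2 : (∏ a : Fin N, ∏ b : Fin N,
          ((if a = v then (if G.Adj v b ∧ v < b ∧ y b = true then (-1:ℂ) else 1) else 1)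
            * (if b = v then (if G.Adj a v ∧ a < v ∧ y a = true then (-1:ℂ) else 1) else 1)))
      = (∏ b : Fin N, (if G.Adj v b ∧ v < b ∧ y b = true then (-1:ℂ) else 1))
        * ∏ a : Fin N, (if G.Adj a v ∧ a < v ∧ y a = true then (-1:ℂ) else 1) := by
    have h1 : ∀ a : Fin N, (∏ b : Fin N,
          ((if a = v then (if G.Adj v b ∧ v < b ∧ y b = true then (-1:ℂ) else 1) else 1)
            * (if b = v then (if G.Adj a v ∧ a < v ∧ y a = true then (-1:ℂ) else 1) else 1)))
        = (if a = v then (∏ b : Fin N, (if G.Adj v b ∧ v < b ∧ y b = true then (-1:ℂ) else 1)) else 1)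
          * (if G.Adj a v ∧ a < v ∧ y a = true then (-1:ℂ) else 1) := by
      intro a
      rw [Finset.prod_mul_distrib]
      congr 1
      · by_cases hav : a = v <;> simp [hav]
      · rw [Finset.prod_ite_eq' Finset.univ v
          (fun _ => if G.Adj a v ∧ a < v ∧ y a = true then (-1:ℂ) else 1)]
        simp
    rw [Finset.prod_congr rfl (fun a _ => h1 a), Finset.prod_mul_distrib]
    congr 1
    rw [Finset.prod_ite_eq' Finset.univ v
      (fun _ => ∏ b : Fin N, (if G.Adj v b ∧ v < b ∧ y b = true then (-1:ℂ) else 1))]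
    simp
  have step3 : (∏ b : Fin N, (if G.Adj v b ∧ v < b ∧ y b = true then (-1:ℂ) else 1))
        * ∏ a : Fin N, (if G.Adj a v ∧ a < v ∧ y a = true then (-1:ℂ) else 1)
      = ∏ j, (if G.Adj v j ∧ y j = true then (-1:ℂ) else 1) := by
    rw [← Finset.prod_mul_distrib]
    refine Finset.prod_congr rfl fun j _ => ?_
    rcases lt_trichotomy v j with hlt | heq | hgt
    · simp [hlt, asymm hlt]
    · simp [← heq, lt_irrefl, SimpleGraph.irrefl]
    · have hnlt : ¬ v < j := asymm hgt
      simp [hgt, hnlt, G.adj_comm]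
  rw [step1, step2, step3, mul_comm]

lemma flipS_pair (v₁ i : Fin N) (hne : v₁ ≠ i) (y : Fin N → Bool) :
    flipS {v₁, i} y
      = Function.update (Function.update y v₁ (!y v₁)) i
          (!(Function.update y v₁ (!y v₁)) i) := by
  funext j
  by_cases hj1 : j = v₁
  · subst hj1
    rw [Function.update_of_ne hne, Function.update_self]
    simp [flipS]
  · by_cases hj2 : j = i
    · subst hj2
      rw [Function.update_self, Function.update_of_ne (Ne.symm hne)]
      simp [flipS, hj1]
    · rw [Function.update_of_ne hj2, Function.update_of_ne hj1]
      simp [flipS, hj1, hj2]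

lemma prod_sgn_flip (v₁ i : Fin N) (hne : v₁ ≠ i) (y : Fin N → Bool) :
    (∏ j, sgn (flipS {v₁, i} y j)) = ∏ j, sgn (y j) := by
  have hpt : ∀ j, sgn (flipS {v₁, i} y j)
      = (if j ∈ ({v₁, i} : Finset (Fin N)) then (-1:ℂ) else 1) * sgn (y j) := by
    intro j
    by_cases hj : j ∈ ({v₁, i} : Finset (Fin N)) <;>
      simp [flipS, hj] <;> cases y j <;> simp [sgn]
  rw [Finset.prod_congr rfl fun j _ => hpt j, Finset.prod_mul_distrib]
  rw [Finset.prod_ite_mem Finset.univ ({v₁, i} : Finset (Fin N)) (fun _ => (-1:ℂ)),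
    Finset.univ_inter, Finset.prod_insert (by simp [hne]), Finset.prod_singleton]
  norm_num

/-- The key sign identity. -/
lemma key_sign (G : SimpleGraph (Fin N)) [DecidableRel G.Adj]
    (v₁ i : Fin N) (h : G.Adj v₁ i) (y : Fin N → Bool) :
    (∏ j ∈ evenNeighbours G v₁ i, sgn (y j)) * inter G (flipS {v₁, i} y)
      = -(inter G y * ∏ j, sgn (y j)) := by
  classical
  have hne : v₁ ≠ i := G.ne_of_adj h
  set y1 := Function.update y v₁ (!y v₁) with hy1
  have hy1v : y1 v₁ = !y v₁ := Function.update_self _ _ _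
  have hy1ne : ∀ j, j ≠ v₁ → y1 j = y j := fun j hj => Function.update_of_ne hj _ _
  rw [flipS_pair v₁ i hne y, ← hy1, inter_update, inter_update]
  have hmain : ∀ j : Fin N,
      ((if j ∈ evenNeighbours G v₁ i then sgn (y j) else 1)
        * (if G.Adj v₁ j ∧ y j = true then (-1:ℂ) else 1))
        * (if G.Adj i j ∧ y1 j = true then (-1:ℂ) else 1)
      = (if j = v₁ then (-1:ℂ) else 1) * sgn (y j) := by
    intro j
    by_cases hj1 : j = v₁
    · simp only [hj1]
      cases hyv : y v₁ <;>
        simp [evenNeighbours, hy1v, h.symm, hyv, sgn, SimpleGraph.irrefl]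
    · by_cases hj2 : j = i
      · simp only [hj2]
        cases hyv : y i <;>
          simp [evenNeighbours, h, hne, Ne.symm hne, hyv, sgn, SimpleGraph.irrefl,
            hy1ne i (Ne.symm hne)]
      · by_cases hA : G.Adj v₁ j <;> by_cases hB : G.Adj i j <;>
          cases hyv : y j <;>
          simp [evenNeighbours, hj1, hj2, hA, hB, hyv, sgn, hy1ne j hj1]
  have hEN : (∏ j ∈ evenNeighbours G v₁ i, sgn (y j))
      = ∏ j, (if j ∈ evenNeighbours G v₁ i then sgn (y j) else 1) := by
    rw [Finset.prod_ite_mem Finset.univ _ (fun j => sgn (y j)), Finset.univ_inter]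
  have hcomb :
      (∏ j ∈ evenNeighbours G v₁ i, sgn (y j))
        * ((∏ j, (if G.Adj v₁ j ∧ y j = true then (-1:ℂ) else 1))
          * ∏ j, (if G.Adj i j ∧ y1 j = true then (-1:ℂ) else 1))
      = -(∏ j, sgn (y j)) := by
    rw [hEN, ← mul_assoc, ← Finset.prod_mul_distrib, ← Finset.prod_mul_distrib,
      Finset.prod_congr rfl fun j _ => hmain j, Finset.prod_mul_distrib,
      Finset.prod_ite_eq' Finset.univ v₁ (fun _ => (-1:ℂ))]
    simp
  linear_combination inter G y * hcomb

/-- for every neighbour `i` of `v₁`, the operator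
`−X_{v₁} ⊗ X_i ⊗ ⊗_{j ∈ EN_i} Z_j` exchanges `|φ₊⟩` and `|φ₋⟩`. -/
theorem negXX_evenNeighbours_swaps_graphState
    (G : SimpleGraph (Fin N)) [DecidableRel G.Adj]
    (v₁ i : Fin N) (h : G.Adj v₁ i) :
    (-pauliString {v₁, i} (evenNeighbours G v₁ i)) *ᵥ graphState G
        = antiGraphState G ∧
    (-pauliString {v₁, i} (evenNeighbours G v₁ i)) *ᵥ antiGraphState G
        = graphState G := by
  classical
  have hne : v₁ ≠ i := G.ne_of_adj h
  have hg : ∀ z : Fin N → Bool,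
      graphState G z = ((Real.sqrt 2 : ℂ))⁻¹ ^ N * inter G z := fun z => rfl
  have ha : ∀ z : Fin N → Bool,
      antiGraphState G z = graphState G z * ∏ j, sgn (z j) := fun z => rfl
  have hENflip : ∀ y : Fin N → Bool, ∀ j ∈ evenNeighbours G v₁ i,
      sgn (flipS {v₁, i} y j) = sgn (y j) := by
    intro y j hj
    rw [evenNeighbours, Finset.mem_filter] at hj
    simp [flipS, hj.2.1, hj.2.2.1]
  have hsq : ∀ y : Fin N → Bool,
      (∏ j, sgn (y j)) * (∏ j, sgn (y j)) = 1 := by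
    intro y
    rw [← Finset.prod_mul_distrib]
    simp [sgn_mul_self]
  constructor
  · funext y
    rw [Matrix.neg_mulVec, Pi.neg_apply, pauliString_mulVec,
      Finset.prod_congr rfl (hENflip y), hg, ha y, hg]
    linear_combination (-(((Real.sqrt 2 : ℂ))⁻¹ ^ N)) * key_sign G v₁ i h y
  · funext y
    rw [Matrix.neg_mulVec, Pi.neg_apply, pauliString_mulVec,
      Finset.prod_congr rfl (hENflip y), ha, hg, hg, prod_sgn_flip v₁ i hne]
    linear_combination (-(((Real.sqrt 2 : ℂ))⁻¹ ^ N * (∏ j, sgn (y j))))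
        * key_sign G v₁ i h y
      + (((Real.sqrt 2 : ℂ))⁻¹ ^ N * inter G y) * hsq y

end
end

section
/- Let K₀⁽¹⁾, K₁⁽¹⁾ and K₀^{(j)}, K₁^{(j)} for j = 2,…,N be self-adjoint operators on finite-dimensional Hilbert spaces with (K_x^{(j)})² ≤ I for all j, x. Then the star-graph dual Bell operator B' := (N−1)(K₀⁽¹⁾ − K₁⁽¹⁾) ⊗ ⊗_{j≥2} K₁^{(j)} − Σ_{j≥2} (K₀⁽¹⁾ + K₁⁽¹⁾) ⊗ K₀^{(j)} (acting on the appropriate tensor factors, with identity elsewhere) satisfies −2√2(N−1)·I ≤ B' ≤ 2√2(N−1)·I. -/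
/-!
Write `A = K₀⁽¹⁾ - K₁⁽¹⁾`, `S = K₀⁽¹⁾ + K₁⁽¹⁾`, `G = A ⊗ ⨂_{j ≥ 2} K₁^{(j)}` and
`P_j = S ⊗ K₀^{(j)}`, so that `B' = (N - 1) G - ∑_j P_j` with `G`, `P_j` self-adjoint.
The operator AM-GM inequality `0 ≤ (√2 - X)²` gives `±2√2 X ≤ 2 + X²`, hence
`2√2 B' ≤ 4(N - 1) + ∑_j (G² + P_j²)`. As every factor squares to at most `1` and the tensor
product is monotone on positive operators, `G² ≤ A² ⊗ 1` and `P_j² ≤ S² ⊗ 1`, while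
`A² + S² = 2(K₀⁽¹⁾² + K₁⁽¹⁾²) ≤ 4`. So `2√2 B' ≤ 8(N - 1)`; replacing `G` and `P_j` by their
negatives gives the lower bound.
-/

open Matrix ComplexOrder

noncomputable section

/-- The Kronecker (tensor) product of a family of square matrices, one per
tensor factor: the `(y, x)` entry is `∏ j, (M j) (y j) (x j)`. -/
def famKron {n : ℕ} {d : Fin n → ℕ}
    (M : (j : Fin n) → Matrix (Fin (d j)) (Fin (d j)) ℂ) :
    Matrix ((j : Fin n) → Fin (d j)) ((j : Fin n) → Fin (d j)) ℂ :=
  fun y x => ∏ j, M j (y j) (x j)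

open scoped MatrixOrder

section StarOrderedAlgebra

variable {R : Type*} [Ring R] [StarRing R] [PartialOrder R] [StarOrderedRing R]
  [Algebra ℝ R] [StarModule ℝ R]

theorem IsSelfAdjoint.two_mul_smul_le {x : R} (hx : IsSelfAdjoint x) (t : ℝ) :
    (2 * t) • x ≤ t ^ 2 • (1 : R) + x * x := by
  have hsq : 0 ≤ (t • 1 - x) * (t • 1 - x) := by
    simpa [hx.star_eq] using star_mul_self_nonneg (t • 1 - x)
  have hexp : (t • 1 - x) * (t • 1 - x) = t ^ 2 • (1 : R) + x * x - (2 * t) • x := by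
    simp only [sub_mul, mul_sub, smul_mul_assoc, mul_smul_comm, one_mul, mul_one]
    module
  rwa [hexp, sub_nonneg] at hsq

variable [PosSMulMono ℝ R]

theorem star_bell_le {ι : Type*} (s : Finset ι) {g : R} {p : ι → R} (hg : IsSelfAdjoint g)
    (hp : ∀ i ∈ s, IsSelfAdjoint (p i)) (h : ∀ i ∈ s, g * g + p i * p i ≤ 4) :
    s.card • g - ∑ i ∈ s, p i ≤ (2 * √2 * s.card) • (1 : R) := by
  have h2 : (√2) ^ 2 = 2 := Real.sq_sqrt zero_le_two
  have hpos : (0 : ℝ) < 2 * √2 := by positivity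
  rw [← smul_le_smul_iff_of_pos_left hpos]
  calc (2 * √2) • (s.card • g - ∑ i ∈ s, p i)
      = ∑ i ∈ s, ((2 * √2) • g + (2 * -√2) • p i) := by
        rw [Finset.sum_add_distrib, Finset.sum_const, ← Finset.smul_sum]
        module
    _ ≤ ∑ i ∈ s, ((√2 ^ 2 • (1 : R) + g * g) + ((-√2) ^ 2 • (1 : R) + p i * p i)) :=
        Finset.sum_le_sum fun i hi =>
          add_le_add (hg.two_mul_smul_le _) ((hp i hi).two_mul_smul_le _)
    _ = ∑ i ∈ s, ((4 : ℝ) • (1 : R) + (g * g + p i * p i)) := by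
        simp only [neg_sq, h2]
        refine Finset.sum_congr rfl fun i _ => ?_
        module
    _ ≤ ∑ i ∈ s, ((4 : ℝ) • (1 : R) + 4) :=
        Finset.sum_le_sum fun i hi => add_le_add le_rfl (h i hi)
    _ = (2 * √2) • ((2 * √2 * s.card) • (1 : R)) := by
        have h4 : (4 : R) = (4 : ℝ) • (1 : R) := by
          rw [ofNat_smul_eq_nsmul, nsmul_one]; rfl
        have h8 : 2 * √2 * (2 * √2 * s.card) = 8 * s.card := by
          linear_combination (4 * s.card : ℝ) * h2
        rw [Finset.sum_const, smul_smul, h8, h4]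
        module

theorem neg_smul_one_le_star_bell {ι : Type*} (s : Finset ι) {g : R} {p : ι → R}
    (hg : IsSelfAdjoint g) (hp : ∀ i ∈ s, IsSelfAdjoint (p i))
    (h : ∀ i ∈ s, g * g + p i * p i ≤ 4) :
    -((2 * √2 * s.card) • (1 : R)) ≤ s.card • g - ∑ i ∈ s, p i := by
  have h' := star_bell_le s hg.neg (fun i hi => (hp i hi).neg) fun i hi => by
    simpa only [neg_mul_neg] using h i hi
  rwa [smul_neg, Finset.sum_neg_distrib, neg_sub_neg, ← neg_sub, neg_le] at h'

end StarOrderedAlgebra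

theorem sub_mul_sub_add_add_mul_add_le_four {R : Type*} [Ring R] [PartialOrder R]
    [IsOrderedAddMonoid R] {a b : R} (ha : a * a ≤ 1) (hb : b * b ≤ 1) :
    (a - b) * (a - b) + (a + b) * (a + b) ≤ 4 := by
  calc (a - b) * (a - b) + (a + b) * (a + b) = (a * a + a * a) + (b * b + b * b) := by
        noncomm_ring
    _ ≤ (1 + 1) + (1 + 1) := add_le_add (add_le_add ha ha) (add_le_add hb hb)
    _ = 4 := by norm_num

section famKron

variable {m : ℕ} {d : Fin m → ℕ}

theorem famKron_mul (M N : (j : Fin m) → Matrix (Fin (d j)) (Fin (d j)) ℂ) :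
    famKron M * famKron N = famKron fun j => M j * N j := by
  ext y x
  simp only [famKron, mul_apply, Fintype.prod_sum, ← Finset.prod_mul_distrib]

theorem famKron_conjTranspose (M : (j : Fin m) → Matrix (Fin (d j)) (Fin (d j)) ℂ) :
    (famKron M)ᴴ = famKron fun j => (M j)ᴴ := by
  ext y x
  simp [famKron, conjTranspose_apply]

theorem famKron_isHermitian {M : (j : Fin m) → Matrix (Fin (d j)) (Fin (d j)) ℂ}
    (hM : ∀ j, (M j).IsHermitian) : (famKron M).IsHermitian := by
  rw [IsHermitian, famKron_conjTranspose]
  exact congrArg famKron (funext hM)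

theorem famKron_one :
    famKron (fun _ => 1 : (j : Fin m) → Matrix (Fin (d j)) (Fin (d j)) ℂ) = 1 := by
  ext y x
  by_cases hyx : y = x
  · subst hyx
    simp [famKron]
  · obtain ⟨j, hj⟩ := Function.ne_iff.mp hyx
    rw [one_apply_ne hyx]
    exact Finset.prod_eq_zero (Finset.mem_univ j) (one_apply_ne hj)

theorem famKron_nonneg {M : (j : Fin m) → Matrix (Fin (d j)) (Fin (d j)) ℂ}
    (hM : ∀ j, 0 ≤ M j) : 0 ≤ famKron M := by
  choose B hB using fun j => CStarAlgebra.nonneg_iff_eq_star_mul_self.mp (hM j)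
  have : famKron M = (famKron B)ᴴ * famKron B := by
    rw [famKron_conjTranspose, famKron_mul]
    exact congrArg famKron (funext hB)
  rw [this]
  exact (posSemidef_conjTranspose_mul_self _).nonneg

theorem famKron_update_apply (F : (j : Fin m) → Matrix (Fin (d j)) (Fin (d j)) ℂ) (j : Fin m)
    (X : Matrix (Fin (d j)) (Fin (d j)) ℂ) (y x : (j : Fin m) → Fin (d j)) :
    famKron (Function.update F j X) y x
      = X (y j) (x j) * ∏ i ∈ Finset.univ.erase j, F i (y i) (x i) := by
  rw [famKron, ← Finset.mul_prod_erase _ _ (Finset.mem_univ j), Function.update_self]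
  congr 1
  exact Finset.prod_congr rfl fun i hi => by
    rw [Function.update_of_ne (Finset.ne_of_mem_erase hi)]

theorem famKron_update_add (F : (j : Fin m) → Matrix (Fin (d j)) (Fin (d j)) ℂ) (j : Fin m)
    (X Y : Matrix (Fin (d j)) (Fin (d j)) ℂ) :
    famKron (Function.update F j (X + Y))
      = famKron (Function.update F j X) + famKron (Function.update F j Y) := by
  ext y x
  simp only [famKron_update_apply, Matrix.add_apply, add_mul]

theorem famKron_update_smul (F : (j : Fin m) → Matrix (Fin (d j)) (Fin (d j)) ℂ) (j : Fin m)
    (c : ℂ) (X : Matrix (Fin (d j)) (Fin (d j)) ℂ) :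
    famKron (Function.update F j (c • X)) = c • famKron (Function.update F j X) := by
  ext y x
  simp only [famKron_update_apply, Matrix.smul_apply, smul_eq_mul, mul_assoc]

theorem famKron_update_mono {F : (j : Fin m) → Matrix (Fin (d j)) (Fin (d j)) ℂ} {a : Fin m}
    (hF : ∀ j ≠ a, 0 ≤ F j) {X Y : Matrix (Fin (d a)) (Fin (d a)) ℂ} (hXY : X ≤ Y) :
    famKron (Function.update F a X) ≤ famKron (Function.update F a Y) := by
  have hsplit : famKron (Function.update F a Y)
      = famKron (Function.update F a (Y - X)) + famKron (Function.update F a X) := by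
    rw [← famKron_update_add, sub_add_cancel]
  rw [hsplit, le_add_iff_nonneg_left]
  refine famKron_nonneg fun j => ?_
  by_cases hj : j = a
  · subst hj
    simpa using sub_nonneg.2 hXY
  · simpa [Function.update_of_ne hj] using hF j hj

theorem famKron_mono {M N : (j : Fin m) → Matrix (Fin (d j)) (Fin (d j)) ℂ}
    (hM : ∀ j, 0 ≤ M j) (hMN : ∀ j, M j ≤ N j) : famKron M ≤ famKron N := by
  classical
  suffices h : ∀ s : Finset (Fin m),
      famKron (fun j => if j ∈ s then M j else N j) ≤ famKron N by
    simpa using h Finset.univ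
  intro s
  induction s using Finset.induction_on with
  | empty => simp
  | insert a s ha ih =>
    set F := fun j => if j ∈ s then M j else N j
    have hFN : Function.update F a (N a) = F := by simp [F, ha]
    have hFM : Function.update F a (M a) = fun j => if j ∈ insert a s then M j else N j := by
      ext1 j
      by_cases hj : j = a
      · subst hj; simp
      · simp [F, hj]
    have hF : ∀ j, 0 ≤ F j := fun j => by
      by_cases hj : j ∈ s
      · simpa [F, hj] using hM j
      · simpa [F, hj] using (hM j).trans (hMN j)
    calc _ = famKron (Function.update F a (M a)) := by rw [hFM]
      _ ≤ famKron (Function.update F a (N a)) := famKron_update_mono (fun j _ => hF j) (hMN a)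
      _ = famKron F := by rw [hFN]
      _ ≤ famKron N := ih

end famKron

section cases

variable {m : ℕ} {d : Fin (m + 1) → ℕ}

theorem famKron_cases_mul (X Y : Matrix (Fin (d 0)) (Fin (d 0)) ℂ)
    (f g : (i : Fin m) → Matrix (Fin (d i.succ)) (Fin (d i.succ)) ℂ) :
    famKron (Fin.cases X f) * famKron (Fin.cases Y g)
      = famKron (Fin.cases (X * Y) fun i => f i * g i) := by
  rw [famKron_mul]
  congr 1
  ext1 j
  cases j using Fin.cases <;> rfl

theorem famKron_cases_add (X Y : Matrix (Fin (d 0)) (Fin (d 0)) ℂ)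
    (f : (i : Fin m) → Matrix (Fin (d i.succ)) (Fin (d i.succ)) ℂ) :
    famKron (Fin.cases X f) + famKron (Fin.cases Y f) = famKron (Fin.cases (X + Y) f) := by
  have h := famKron_update_add (Fin.cons (α := fun j => Matrix (Fin (d j)) (Fin (d j)) ℂ) X f)
    0 X Y
  simp only [Fin.update_cons_zero] at h
  exact h.symm

theorem famKron_cases_smul (c : ℂ) (X : Matrix (Fin (d 0)) (Fin (d 0)) ℂ)
    (f : (i : Fin m) → Matrix (Fin (d i.succ)) (Fin (d i.succ)) ℂ) :
    famKron (Fin.cases (c • X) f) = c • famKron (Fin.cases X f) := by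
  have h := famKron_update_smul (Fin.cons (α := fun j => Matrix (Fin (d j)) (Fin (d j)) ℂ) X f)
    0 c X
  simp only [Fin.update_cons_zero] at h
  exact h

theorem famKron_cases_one :
    famKron (Fin.cases (1 : Matrix (Fin (d 0)) (Fin (d 0)) ℂ) fun _ => 1) = 1 := by
  rw [← famKron_one]
  congr 1
  ext1 j
  cases j using Fin.cases <;> rfl

theorem famKron_cases_isHermitian {X : Matrix (Fin (d 0)) (Fin (d 0)) ℂ}
    {f : (i : Fin m) → Matrix (Fin (d i.succ)) (Fin (d i.succ)) ℂ}
    (hX : X.IsHermitian) (hf : ∀ i, (f i).IsHermitian) :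
    (famKron (Fin.cases X f)).IsHermitian :=
  famKron_isHermitian (Fin.forall_fin_succ.2 ⟨hX, hf⟩)

theorem famKron_cases_mul_self_le {X : Matrix (Fin (d 0)) (Fin (d 0)) ℂ}
    {f : (i : Fin m) → Matrix (Fin (d i.succ)) (Fin (d i.succ)) ℂ}
    (hX : X.IsHermitian) (hf : ∀ i, (f i).IsHermitian) (hf1 : ∀ i, f i * f i ≤ 1) :
    famKron (Fin.cases X f) * famKron (Fin.cases X f)
      ≤ famKron (Fin.cases (X * X) fun _ => 1) := by
  rw [famKron_cases_mul]
  refine famKron_mono (Fin.forall_fin_succ.2 ⟨?_, fun i => ?_⟩)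
    (Fin.forall_fin_succ.2 ⟨le_rfl, hf1⟩)
  · exact hX.isSelfAdjoint.mul_self_nonneg
  · exact (hf i).isSelfAdjoint.mul_self_nonneg

theorem famKron_cases_sub_mul_self_add_le_four {A B : Matrix (Fin (d 0)) (Fin (d 0)) ℂ}
    {f g : (i : Fin m) → Matrix (Fin (d i.succ)) (Fin (d i.succ)) ℂ}
    (hA : A.IsHermitian) (hB : B.IsHermitian) (hA1 : A * A ≤ 1) (hB1 : B * B ≤ 1)
    (hf : ∀ i, (f i).IsHermitian) (hf1 : ∀ i, f i * f i ≤ 1)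
    (hg : ∀ i, (g i).IsHermitian) (hg1 : ∀ i, g i * g i ≤ 1) :
    famKron (Fin.cases (A - B) f) * famKron (Fin.cases (A - B) f)
      + famKron (Fin.cases (A + B) g) * famKron (Fin.cases (A + B) g) ≤ 4 := by
  have h4 : (4 : Matrix (Fin (d 0)) (Fin (d 0)) ℂ) = (4 : ℂ) • 1 := by
    rw [ofNat_smul_eq_nsmul, nsmul_one]; rfl
  calc _ ≤ famKron (Fin.cases ((A - B) * (A - B)) fun _ => 1)
        + famKron (Fin.cases ((A + B) * (A + B)) fun _ => 1) :=
        add_le_add (famKron_cases_mul_self_le (hA.sub hB) hf hf1)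
          (famKron_cases_mul_self_le (hA.add hB) hg hg1)
    _ = famKron (Fin.cases ((A - B) * (A - B) + (A + B) * (A + B)) fun _ => 1) :=
        famKron_cases_add _ _ _
    _ ≤ famKron (Fin.cases 4 fun _ => 1) := by
        refine famKron_mono (Fin.forall_fin_succ.2 ⟨?_, fun _ => zero_le_one⟩)
          (Fin.forall_fin_succ.2 ⟨sub_mul_sub_add_add_mul_add_le_four hA1 hB1, fun _ => le_rfl⟩)
        exact add_nonneg (hA.sub hB).isSelfAdjoint.mul_self_nonneg
          (hA.add hB).isSelfAdjoint.mul_self_nonneg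
    _ = 4 := by
        rw [h4, famKron_cases_smul, famKron_cases_one, ofNat_smul_eq_nsmul, nsmul_one]
        rfl

end cases

/-- the star-graph dual Bell operator
`B' = (N−1)(K₀⁽¹⁾−K₁⁽¹⁾)⊗⊗_{j≥2}K₁^{(j)} − Σ_{j≥2}(K₀⁽¹⁾+K₁⁽¹⁾)⊗K₀^{(j)}`
(identity on unlisted factors) built from dichotomic-norm operators
(`K` self-adjoint with `K² ≤ I`) satisfies `−2√2(N−1)·I ≤ B' ≤ 2√2(N−1)·I`. -/
theorem star_dual_bell_operator_bound
    {n : ℕ} {d : Fin (n + 1) → ℕ}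
    (K : (j : Fin (n + 1)) → Fin 2 → Matrix (Fin (d j)) (Fin (d j)) ℂ)
    (hherm : ∀ j x, (K j x).IsHermitian)
    (hsq : ∀ j x, (1 - K j x * K j x).PosSemidef) :
    letI B' : Matrix ((j : Fin (n + 1)) → Fin (d j))
        ((j : Fin (n + 1)) → Fin (d j)) ℂ :=
      (n : ℂ) • famKron (Fin.cases (K 0 0 - K 0 1) (fun i => K i.succ 1))
        - ∑ j : Fin n,
            famKron (Fin.cases (K 0 0 + K 0 1)
              (fun i => if i = j then K i.succ 0 else 1))
    (((2 * Real.sqrt 2 * n : ℝ) : ℂ) • (1 : Matrix _ _ ℂ) - B').PosSemidef ∧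
    (B' + ((2 * Real.sqrt 2 * n : ℝ) : ℂ) • (1 : Matrix _ _ ℂ)).PosSemidef := by
  set G := famKron (Fin.cases (K 0 0 - K 0 1) fun i => K i.succ 1)
  set P : Fin n → Matrix _ _ ℂ := fun j =>
    famKron (Fin.cases (K 0 0 + K 0 1) fun i => if i = j then K i.succ 0 else 1)
  have hK1 : ∀ j x, K j x * K j x ≤ 1 := hsq
  have hfj : ∀ j i : Fin n, (if i = j then K i.succ 0 else 1).IsHermitian := fun j i => by
    split_ifs
    exacts [hherm _ _, isHermitian_one]
  have hfj1 : ∀ j i : Fin n,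
      (if i = j then K i.succ 0 else 1) * (if i = j then K i.succ 0 else 1) ≤ 1 := fun j i => by
    split_ifs
    exacts [hK1 _ _, (mul_one _).le]
  have hG : IsSelfAdjoint G :=
    (famKron_cases_isHermitian ((hherm 0 0).sub (hherm 0 1)) fun _ => hherm _ 1).isSelfAdjoint
  have hP : ∀ j, IsSelfAdjoint (P j) := fun j =>
    (famKron_cases_isHermitian ((hherm 0 0).add (hherm 0 1)) (hfj j)).isSelfAdjoint
  have hGP : ∀ j, G * G + P j * P j ≤ 4 := fun j =>
    famKron_cases_sub_mul_self_add_le_four (hherm 0 0) (hherm 0 1) (hK1 0 0) (hK1 0 1)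
      (fun _ => hherm _ 1) (fun _ => hK1 _ 1) (hfj j) (hfj1 j)
  simp only [Complex.coe_smul, Nat.cast_smul_eq_nsmul]
  have hupper := star_bell_le Finset.univ hG (fun j _ => hP j) fun j _ => hGP j
  have hlower := neg_smul_one_le_star_bell Finset.univ hG (fun j _ => hP j) fun j _ => hGP j
  simp only [Finset.card_univ, Fintype.card_fin] at hupper hlower
  refine ⟨hupper, ?_⟩
  rw [← sub_neg_eq_add]
  exact hlower
end
end
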